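/- Let X_n be the family of maximal independent sets of C_n, acted on by the dihedral group D_{2n} of order 2n. For each divisor d of 2n, let orb_d(n) be the number of orbits of size 2n/d. Then p(n) = Σ_{d | 2n} (2n/d) · orb_d(n), where p is the Perrin sequence. -/

import Mathlib

/-- The Perrin sequence: p 1 = 0, p 2 = 2, p 3 = 3, p n = p (n-2) + p (n-3). -/
def perrin : ℕ → ℕ
  | 0 => 3
  | 1 => 0
  | 2 => 2
  | n + 3 => perrin (n + 1) + perrin n

/-- The Padovan sequence: q 1 = 0, q 2 = 1, q 3 = 1, q n = q (n-2) + q (n-3). -/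
def padovan : ℕ → ℕ
  | 0 => 1
  | 1 => 0
  | 2 => 1
  | n + 3 => padovan (n + 1) + padovan n

/-- r n = q k if n = 2k - 1 is odd, q (k+2) if n = 2k is even. -/
def rseq (n : ℕ) : ℕ := if n % 2 = 1 then padovan ((n + 1) / 2) else padovan (n / 2 + 2)

/-- The cycle graph C_n on vertex set ZMod n. -/
def cycleGraph (n : ℕ) : SimpleGraph (ZMod n) := SimpleGraph.fromRel (fun i j => j = i + 1)

/-- X is a maximal independent set of C_n. -/
def IsMIS (n : ℕ) (X : Set (ZMod n)) : Prop :=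
  X.Pairwise (fun a b => ¬ (cycleGraph n).Adj a b) ∧
  ∀ Y : Set (ZMod n), Y.Pairwise (fun a b => ¬ (cycleGraph n).Adj a b) → X ⊆ Y → X = Y

/-- The element of the dihedral group D_{2n} indexed by (k, ε) acts on ZMod n:
rotation σ^k (x ↦ x + k) if ε = false, reflection σ^k τ (x ↦ k - x) if ε = true. -/
def dihApply (n : ℕ) (g : ZMod n × Bool) (x : ZMod n) : ZMod n :=
  if g.2 then g.1 - x else x + g.1

/-- The orbit of X under the dihedral group D_{2n}. -/
def dOrbit (n : ℕ) (X : Set (ZMod n)) : Set (Set (ZMod n)) :=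
  {Y | ∃ g : ZMod n × Bool, dihApply n g '' X = Y}

/-- The stabilizer of X in the dihedral group D_{2n}. -/
def dStab (n : ℕ) (X : Set (ZMod n)) : Set (ZMod n × Bool) :=
  {g | dihApply n g '' X = X}

/-- The set of orbits of maximal independent sets of C_n under D_{2n}. -/
def misOrbits (n : ℕ) : Set (Set (Set (ZMod n))) :=
  {O | ∃ X, IsMIS n X ∧ O = dOrbit n X}

/-- orb n : the number of orbits of MISs of C_n under D_{2n}. -/
noncomputable def orb (n : ℕ) : ℕ := (misOrbits n).ncard

/-- orb_d n : the number of orbits of MISs of C_n whose elements have stabilizer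
of cardinality d (equivalently, orbits of size 2n/d). -/
noncomputable def orbd (d n : ℕ) : ℕ :=
  {O | ∃ X, IsMIS n X ∧ O = dOrbit n X ∧ (dStab n X).ncard = d}.ncard

/-- The rotation σ^k on ZMod n. -/
def rotApply (n : ℕ) (k : ZMod n) (x : ZMod n) : ZMod n := x + k

/-- The orbit of X under the cyclic rotation group ⟨σ⟩. -/
def rOrbit (n : ℕ) (X : Set (ZMod n)) : Set (Set (ZMod n)) :=
  {Y | ∃ k : ZMod n, rotApply n k '' X = Y}

/-- The stabilizer of X in the rotation group ⟨σ⟩. -/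
def rStab (n : ℕ) (X : Set (ZMod n)) : Set (ZMod n) :=
  {k | rotApply n k '' X = X}

/-- orb^σ n : the number of orbits of MISs of C_n under rotations (unlabeled MISs). -/
noncomputable def orbSigma (n : ℕ) : ℕ := {O | ∃ X, IsMIS n X ∧ O = rOrbit n X}.ncard

/-- orb^σ_d n : the number of rotation-orbits of MISs of C_n whose elements have
stabilizer of cardinality d in ⟨σ⟩. -/
noncomputable def orbdSigma (d n : ℕ) : ℕ :=
  {O | ∃ X, IsMIS n X ∧ O = rOrbit n X ∧ (rStab n X).ncard = d}.ncard

/-- X has at least one symmetry axis: it is fixed by some reflection x ↦ k - x. -/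
def HasAxis (n : ℕ) (X : Set (ZMod n)) : Prop := ∃ k : ZMod n, (fun x => k - x) '' X = X

/-- The number of orbits of MISs of C_n under D_{2n} whose elements have at least
one symmetry axis. -/
noncomputable def orbAxis (n : ℕ) : ℕ :=
  {O | ∃ X, IsMIS n X ∧ O = dOrbit n X ∧ HasAxis n X}.ncard

/-- Every part of the list is 2 or 3. -/
def parts23 (l : List ℕ) : Prop := ∀ a ∈ l, a = 2 ∨ a = 3

/-- The cyclic class of a composition: all rotations of the list. -/
def rotClass (l : List ℕ) : Set (List ℕ) := {m | ∃ k, m = l.rotate k}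

/-- The cyclic class of a composition up to rotation and reversal. -/
def rotRevClass (l : List ℕ) : Set (List ℕ) :=
  {m | ∃ k, m = l.rotate k ∨ m = l.reverse.rotate k}


set_option linter.unusedTactic false
set_option linter.unreachableTactic false
-- dihedral multiplication and inverse
def dmul (n : ℕ) (g h : ZMod n × Bool) : ZMod n × Bool :=
  ((if g.2 then g.1 - h.1 else g.1 + h.1), xor g.2 h.2)

def dinv (n : ℕ) (g : ZMod n × Bool) : ZMod n × Bool :=
  if g.2 then g else (-g.1, false)

lemma dihApply_dmul (n : ℕ) (g h : ZMod n × Bool) (x : ZMod n) :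
    dihApply n (dmul n g h) x = dihApply n g (dihApply n h x) := by
  obtain ⟨a, ε⟩ := g; obtain ⟨b, δ⟩ := h
  cases ε <;> cases δ <;> simp [dihApply, dmul] <;> ring

lemma dmul_dinv_cancel (n : ℕ) (g h : ZMod n × Bool) : dmul n g (dmul n (dinv n g) h) = h := by
  obtain ⟨a, ε⟩ := g; obtain ⟨b, δ⟩ := h
  cases ε <;> cases δ <;> simp [dmul, dinv] <;> ring

lemma dinv_dmul_cancel (n : ℕ) (g h : ZMod n × Bool) : dmul n (dinv n g) (dmul n g h) = h := by
  obtain ⟨a, ε⟩ := g; obtain ⟨b, δ⟩ := h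
  cases ε <;> cases δ <;> simp [dmul, dinv] <;> ring

lemma image_dmul (n : ℕ) (g h : ZMod n × Bool) (X : Set (ZMod n)) :
    dihApply n (dmul n g h) '' X = dihApply n g '' (dihApply n h '' X) := by
  rw [← Set.image_comp]
  exact Set.image_congr (fun x _ => dihApply_dmul n g h x)

lemma dihApply_one (n : ℕ) (x : ZMod n) : dihApply n (0, false) x = x := by simp [dihApply]

lemma dmul_dinv_self (n : ℕ) (g : ZMod n × Bool) : dmul n (dinv n g) g = (0, false) := by
  obtain ⟨a, ε⟩ := g; cases ε <;> simp [dmul, dinv]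

lemma image_dinv (n : ℕ) (g : ZMod n × Bool) (X : Set (ZMod n)) :
    dihApply n (dinv n g) '' (dihApply n g '' X) = X := by
  rw [← image_dmul, dmul_dinv_self]
  simp [Set.image_congr (fun x _ => dihApply_one n x)]

lemma dmul_left_injective (n : ℕ) (h : ZMod n × Bool) : Function.Injective (dmul n h) := by
  intro a b hab
  have := congrArg (dmul n (dinv n h)) hab
  rwa [dinv_dmul_cancel, dinv_dmul_cancel] at this

lemma fiber_eq (n : ℕ) (X Y : Set (ZMod n)) (h : ZMod n × Bool)
    (hY : dihApply n h '' X = Y) :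
    {g | dihApply n g '' X = Y} = dmul n h '' dStab n X := by
  ext g
  simp only [Set.mem_setOf_eq, Set.mem_image]
  constructor
  · intro hg
    refine ⟨dmul n (dinv n h) g, ?_, dmul_dinv_cancel n h g⟩
    show dihApply n _ '' X = X
    rw [image_dmul, hg, ← hY, image_dinv]
  · rintro ⟨s, hs, rfl⟩
    rw [image_dmul, hs, hY]

lemma ncard_fiber (n : ℕ) (X Y : Set (ZMod n)) (h : ZMod n × Bool)
    (hY : dihApply n h '' X = Y) :
    {g | dihApply n g '' X = Y}.ncard = (dStab n X).ncard := by
  rw [fiber_eq n X Y h hY, Set.ncard_image_of_injective _ (dmul_left_injective n h)]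

lemma orbit_mul_stab (n : ℕ) [NeZero n] (X : Set (ZMod n)) :
    (dOrbit n X).ncard * (dStab n X).ncard = 2 * n := by
  classical
  have key : (Finset.univ : Finset (ZMod n × Bool)).card =
      ∑ Y ∈ (dOrbit n X).toFinset, (Finset.univ.filter (fun g => dihApply n g '' X = Y)).card := by
    apply Finset.card_eq_sum_card_fiberwise
    intro g _
    simp only [Finset.mem_coe, Set.mem_toFinset]
    exact ⟨g, rfl⟩
  have hcard : (Finset.univ : Finset (ZMod n × Bool)).card = 2 * n := by
    simp [Finset.card_univ, ZMod.card, Nat.mul_comm]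
  rw [hcard] at key
  rw [key]
  rw [Finset.sum_congr rfl (fun Y hY => ?_)]
  · rw [Finset.sum_const, Set.ncard_eq_toFinset_card', smul_eq_mul]
  · simp only [Set.mem_toFinset] at hY
    obtain ⟨h, hh⟩ := hY
    rw [← ncard_fiber n X Y h hh, Set.ncard_eq_toFinset_card']
    congr 1
    ext g
    simp

def LocMIS (n : ℕ) (X : Set (ZMod n)) : Prop :=
  (∀ x, x ∈ X → x + 1 ∉ X) ∧ ∀ x, x ∉ X → (x - 1 ∈ X ∨ x + 1 ∈ X)

lemma adj_iff (n : ℕ) (a b : ZMod n) :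
    (cycleGraph n).Adj a b ↔ a ≠ b ∧ (b = a + 1 ∨ a = b + 1) := by
  simp [cycleGraph, SimpleGraph.fromRel_adj]

lemma mis_iff (n : ℕ) (hn : 3 ≤ n) (X : Set (ZMod n)) : IsMIS n X ↔ LocMIS n X := by
  haveI : NeZero n := ⟨by omega⟩
  haveI : Fact (1 < n) := ⟨by omega⟩
  have hone : (1 : ZMod n) ≠ 0 := one_ne_zero
  have hself : ∀ x : ZMod n, x ≠ x + 1 := by
    intro x h
    exact hone (by linear_combination -h)
  constructor
  · rintro ⟨hind, hmax⟩
    constructor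
    · intro x hx hx1
      exact hind hx hx1 (hself x) ((adj_iff n x (x+1)).2 ⟨hself x, Or.inl rfl⟩)
    · intro x hx
      by_contra hcon
      push_neg at hcon
      obtain ⟨h1, h2⟩ := hcon
      have hins : (insert x X).Pairwise (fun a b => ¬ (cycleGraph n).Adj a b) := by
        apply hind.insert
        intro b hb hbx
        have hb1 : ¬ (cycleGraph n).Adj x b := by
          rw [adj_iff]
          rintro ⟨-, h | h⟩
          · exact h2 (h ▸ hb)
          · exact h1 (by rw [h]; simpa using hb)
        exact ⟨hb1, fun h => hb1 h.symm⟩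
      have := hmax (insert x X) hins (Set.subset_insert x X)
      exact hx (this ▸ Set.mem_insert x X)
  · rintro ⟨hA, hB⟩
    constructor
    · intro a ha b hb hab hadj
      rw [adj_iff] at hadj
      obtain ⟨-, h | h⟩ := hadj
      · exact hA a ha (h ▸ hb)
      · exact hA b hb (h ▸ ha)
    · intro Y hY hXY
      apply Set.Subset.antisymm hXY
      intro y hy
      by_contra hyX
      obtain h | h := hB y hyX
      · have hne : y - 1 ≠ y := by intro hc; exact hone (by linear_combination -hc)
        exact hY (hXY h) hy hne ((adj_iff n _ _).2 ⟨hne, Or.inl (by ring)⟩)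
      · have hne : y + 1 ≠ y := fun hc => hone (by linear_combination hc)
        exact hY (hXY h) hy hne ((adj_iff n _ _).2 ⟨hne, Or.inr rfl⟩)

lemma dmul_dinv_self' (n : ℕ) (g : ZMod n × Bool) : dmul n g (dinv n g) = (0, false) := by
  obtain ⟨a, ε⟩ := g; cases ε <;> simp [dmul, dinv]

lemma mem_image_dih (n : ℕ) (g : ZMod n × Bool) (X : Set (ZMod n)) (y : ZMod n) :
    y ∈ dihApply n g '' X ↔ dihApply n (dinv n g) y ∈ X := by
  constructor
  · rintro ⟨x, hx, rfl⟩
    rw [← dihApply_dmul, dmul_dinv_self, dihApply_one]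
    exact hx
  · intro h
    exact ⟨_, h, by rw [← dihApply_dmul, dmul_dinv_self', dihApply_one]⟩

lemma locmis_image (n : ℕ) (g : ZMod n × Bool) (X : Set (ZMod n)) (hX : LocMIS n X) :
    LocMIS n (dihApply n g '' X) := by
  obtain ⟨hA, hB⟩ := hX
  obtain ⟨k, ε⟩ := g
  have hinv : ∀ y : ZMod n, dihApply n (dinv n (k, ε)) y ∈ X ↔ y ∈ dihApply n (k, ε) '' X :=
    fun y => (mem_image_dih n (k, ε) X y).symm
  cases ε
  · -- rotation: ψ y = y - k
    have hψ : ∀ y : ZMod n, dihApply n (dinv n (k, false)) y = y - k := by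
      intro y; simp [dihApply, dinv]; ring
    constructor
    · intro y hy hy1
      rw [← hinv, hψ] at hy hy1
      exact hA (y - k) hy (by rw [show y + 1 - k = y - k + 1 by ring] at hy1; exact hy1)
    · intro y hy
      rw [← hinv, hψ] at hy
      rcases hB (y - k) hy with h | h
      · left; rw [← hinv, hψ, show y - 1 - k = y - k - 1 by ring]; exact h
      · right; rw [← hinv, hψ, show y + 1 - k = y - k + 1 by ring]; exact h
  · -- reflection: ψ y = k - y
    have hψ : ∀ y : ZMod n, dihApply n (dinv n (k, true)) y = k - y := by
      intro y; simp [dihApply, dinv]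
    constructor
    · intro y hy hy1
      rw [← hinv, hψ] at hy hy1
      exact hA (k - (y+1)) hy1 (by rw [show k - (y+1) + 1 = k - y by ring]; exact hy)
    · intro y hy
      rw [← hinv, hψ] at hy
      rcases hB (k - y) hy with h | h
      · right; rw [← hinv, hψ, show k - (y + 1) = k - y - 1 by ring]; exact h
      · left; rw [← hinv, hψ, show k - (y - 1) = k - y + 1 by ring]; exact h

lemma mis_image (n : ℕ) (hn : 3 ≤ n) (g : ZMod n × Bool) (X : Set (ZMod n)) (hX : IsMIS n X) :
    IsMIS n (dihApply n g '' X) := by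
  rw [mis_iff n hn] at hX ⊢
  exact locmis_image n g X hX

lemma mem_dOrbit_self (n : ℕ) (X : Set (ZMod n)) : X ∈ dOrbit n X :=
  ⟨(0, false), by rw [show dihApply n (0, false) '' X = id '' X from
    Set.image_congr (fun x _ => dihApply_one n x), Set.image_id]⟩

lemma dOrbit_eq_of_mem (n : ℕ) {X Y : Set (ZMod n)} (h : Y ∈ dOrbit n X) :
    dOrbit n Y = dOrbit n X := by
  obtain ⟨g, rfl⟩ := h
  ext Z
  constructor
  · rintro ⟨h, rfl⟩
    exact ⟨dmul n h g, by rw [image_dmul]⟩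
  · rintro ⟨h, rfl⟩
    exact ⟨dmul n h (dinv n g), by rw [image_dmul, image_dinv]⟩

lemma dOrbit_ncard_pos (n : ℕ) [NeZero n] (X : Set (ZMod n)) : 0 < (dOrbit n X).ncard :=
  Set.ncard_pos (Set.toFinite _) |>.2 ⟨X, mem_dOrbit_self n X⟩

lemma dStab_ncard_eq (n : ℕ) [NeZero n] (X : Set (ZMod n)) :
    (dStab n X).ncard = 2 * n / (dOrbit n X).ncard := by
  have h := orbit_mul_stab n X
  have hpos := dOrbit_ncard_pos n X
  rw [← h, Nat.mul_div_cancel_left _ hpos]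


lemma dOrbit_ncard_dvd (n : ℕ) [NeZero n] (X : Set (ZMod n)) :
    (dOrbit n X).ncard ∣ 2 * n :=
  ⟨(dStab n X).ncard, (orbit_mul_stab n X).symm⟩

lemma orbd_eq (d n : ℕ) [NeZero n] :
    {O | ∃ X, IsMIS n X ∧ O = dOrbit n X ∧ (dStab n X).ncard = d} =
    {O | O ∈ misOrbits n ∧ 2 * n / O.ncard = d} := by
  ext O
  constructor
  · rintro ⟨X, hX, rfl, hd⟩
    exact ⟨⟨X, hX, rfl⟩, by rw [← dStab_ncard_eq]; exact hd⟩
  · rintro ⟨⟨X, hX, rfl⟩, hd⟩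
    exact ⟨X, hX, rfl, by rw [dStab_ncard_eq]; exact hd⟩

lemma fiber_eq_orbit (n : ℕ) (hn : 3 ≤ n) {O : Set (Set (ZMod n))} (hO : O ∈ misOrbits n) :
    {X | IsMIS n X ∧ dOrbit n X = O} = O := by
  obtain ⟨X₀, hX₀, rfl⟩ := hO
  ext Y
  constructor
  · rintro ⟨hY, hYO⟩
    rw [← hYO]
    exact mem_dOrbit_self n Y
  · intro hY
    refine ⟨?_, dOrbit_eq_of_mem n hY⟩
    obtain ⟨g, rfl⟩ := hY
    exact mis_image n hn g X₀ hX₀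

theorem sum_orbd (n : ℕ) (hn : 3 ≤ n) :
    ∑ d ∈ (2 * n).divisors, (2 * n / d) * orbd d n = {X | IsMIS n X}.ncard := by
  classical
  haveI : NeZero n := ⟨by omega⟩
  have h2n : 2 * n ≠ 0 := by omega
  -- step 1: rewrite orbd as a filter card over misOrbits
  have horbd : ∀ d, orbd d n = ((misOrbits n).toFinset.filter (fun O => 2 * n / O.ncard = d)).card := by
    intro d
    rw [orbd, orbd_eq d n, Set.ncard_eq_toFinset_card']
    congr 1
    ext O
    simp [Set.mem_toFinset]
  have key : ∀ d ∈ (2 * n).divisors,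
      (2 * n / d) * orbd d n
        = ∑ O ∈ (misOrbits n).toFinset.filter (fun O => 2 * n / O.ncard = d), O.ncard := by
    intro d hd
    rw [horbd d, Finset.sum_congr rfl (fun O hO => ?_), Finset.sum_const, smul_eq_mul, mul_comm]
    simp only [Finset.mem_filter, Set.mem_toFinset] at hO
    obtain ⟨hOm, hOd⟩ := hO
    obtain ⟨X, hX, rfl⟩ := hOm
    rw [← hOd, Nat.div_div_self (dOrbit_ncard_dvd n X) h2n]
  rw [Finset.sum_congr rfl key]
  rw [Finset.sum_fiberwise_of_maps_to (fun O hO => ?_) (fun O => (O : Set (Set (ZMod n))).ncard)]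
  · -- ∑ over orbits of orbit size = number of MISs
    rw [Set.ncard_eq_toFinset_card']
    rw [Finset.card_eq_sum_card_fiberwise
      (f := fun X => dOrbit n X) (t := (misOrbits n).toFinset)
      (fun X hX => by simp only [Finset.mem_coe, Set.mem_toFinset] at hX ⊢; exact ⟨X, hX, rfl⟩)]
    refine Finset.sum_congr rfl (fun O hO => ?_)
    simp only [Set.mem_toFinset] at hO
    have : ({X | IsMIS n X}.toFinset.filter (fun X => dOrbit n X = O)) =
        ({X | IsMIS n X ∧ dOrbit n X = O} : Set _).toFinset := by
      ext Y; simp [Set.mem_toFinset]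
    rw [this, ← Set.ncard_eq_toFinset_card', fiber_eq_orbit n hn hO]
  · -- key maps into divisors
    simp only [Set.mem_toFinset] at hO
    obtain ⟨X, hX, rfl⟩ := hO
    exact Nat.mem_divisors.2 ⟨Nat.div_dvd_of_dvd (dOrbit_ncard_dvd n X), h2n⟩

def stepB : Fin 3 → Fin 3 → Bool := fun a b =>
  !![false,true,false; false,false,true; true,true,false] a b

def Mtr : Matrix (Fin 3) (Fin 3) ℕ := fun a b => if stepB a b then 1 else 0

def W (k : ℕ) (a b : Fin 3) : Finset (Fin (k+1) → Fin 3) :=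
  Finset.univ.filter (fun w => w 0 = a ∧ w (Fin.last k) = b ∧
    ∀ i : Fin k, stepB (w i.castSucc) (w i.succ))

lemma W_zero (a b : Fin 3) : (W 0 a b).card = if a = b then 1 else 0 := by
  by_cases h : a = b
  · subst h
    rw [if_pos rfl, Finset.card_eq_one]
    refine ⟨fun _ => a, ?_⟩
    ext w
    simp only [W, Finset.mem_filter, Finset.mem_univ, true_and, Finset.mem_singleton]
    constructor
    · rintro ⟨h0, -, -⟩
      funext i
      rw [Fin.eq_zero i, h0]
    · rintro rfl
      exact ⟨rfl, rfl, fun i => i.elim0⟩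
  · rw [if_neg h, Finset.card_eq_zero]
    ext w
    simp only [W, Finset.mem_filter, Finset.mem_univ, true_and, Finset.notMem_empty,
      iff_false, not_and]
    intro h0 hl
    exact absurd (by rw [← h0, ← hl]; rfl) h
    
lemma W_succ (k : ℕ) (a b : Fin 3) :
    (W (k+1) a b).card = ∑ c : Fin 3, (if stepB a c then 1 else 0) * (W k c b).card := by
  classical
  rw [Finset.card_eq_sum_card_fiberwise (f := fun w => w 1) (t := Finset.univ) (fun _ _ => Finset.mem_univ _)]
  refine Finset.sum_congr rfl (fun c _ => ?_)
  by_cases hac : stepB a c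
  · rw [if_pos hac, one_mul]
    apply Finset.card_bij' (fun w _ => w ∘ Fin.succ)
      (fun w' _ => Fin.cons a w')
    · -- maps to
      intro w hw
      simp only [Finset.mem_filter, W, Finset.mem_univ, true_and] at hw ⊢
      obtain ⟨⟨h0, hl, hs⟩, h1⟩ := hw
      refine ⟨h1, ?_, ?_⟩
      · show w (Fin.last k).succ = b
        rw [Fin.succ_last]; exact hl
      · intro i
        have := hs i.succ
        rwa [← Fin.succ_castSucc] at this
    · -- inverse maps to
      intro w' hw'
      simp only [Finset.mem_filter, W, Finset.mem_univ, true_and] at hw' ⊢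
      obtain ⟨h0, hl, hs⟩ := hw'
      refine ⟨⟨by simp, ?_, ?_⟩, ?_⟩
      · rw [← Fin.succ_last, Fin.cons_succ]; exact hl
      · intro i
        induction i using Fin.cases with
        | zero =>
            simpa [Fin.cons_zero, Fin.cons_succ, h0] using hac
        | succ j =>
            rw [← Fin.succ_castSucc, Fin.cons_succ, Fin.cons_succ]
            exact hs j
      · rw [show (1 : Fin (k+2)) = (0 : Fin (k+1)).succ from rfl, Fin.cons_succ]
        exact h0
    · -- left inverse
      intro w hw
      simp only [Finset.mem_filter, W, Finset.mem_univ, true_and] at hw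
      obtain ⟨⟨h0, -, -⟩, -⟩ := hw
      funext i
      induction i using Fin.cases with
      | zero => simp [h0]
      | succ j => simp
    · -- right inverse
      intro w' _
      funext i
      simp
  · rw [if_neg hac, zero_mul, Finset.card_eq_zero]
    ext w
    simp only [Finset.mem_filter, W, Finset.mem_univ, true_and, Finset.notMem_empty, iff_false,
      not_and]
    rintro ⟨h0, -, hs⟩ h1
    have := hs 0
    rw [show (0 : Fin (k+1)).castSucc = 0 from rfl, h0,
      show (0 : Fin (k+1)).succ = 1 from rfl, h1] at this
    exact hac this

lemma W_card (k : ℕ) (a b : Fin 3) : (W k a b).card = (Mtr ^ k) a b := by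
  induction k generalizing a b with
  | zero => rw [W_zero, pow_zero]; simp [Matrix.one_apply]
  | succ k ih =>
      rw [W_succ, pow_succ', Matrix.mul_apply]
      exact Finset.sum_congr rfl (fun c _ => by rw [ih c b]; rfl)

lemma Mcube : Mtr ^ 3 = Mtr + 1 := by
  rw [pow_succ, pow_two]
  ext i j
  fin_cases i <;> fin_cases j <;>
    simp [Matrix.mul_apply, Matrix.one_apply, Mtr, stepB, Fin.sum_univ_three]

lemma trace_pow_add3 (k : ℕ) :
    (Mtr ^ (k + 3)).trace = (Mtr ^ (k + 1)).trace + (Mtr ^ k).trace := by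
  have h : Mtr ^ (k + 3) = Mtr ^ (k + 1) + Mtr ^ k := by
    rw [pow_add, Mcube, mul_add, mul_one, ← pow_succ]
  rw [h, Matrix.trace_add]

lemma perrin_trace : ∀ n, perrin n = (Mtr ^ n).trace
  | 0 => by
      rw [pow_zero, Matrix.trace_one]
      rfl
  | 1 => by
      rw [pow_one]
      show 0 = _
      simp [Matrix.trace, Matrix.diag, Mtr, stepB, Fin.sum_univ_three]
      decide
  | 2 => by
      rw [pow_two]
      show 2 = _
      simp [Matrix.trace, Matrix.diag, Matrix.mul_apply, Mtr, stepB, Fin.sum_univ_three]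
  | (n + 3) => by
      rw [show perrin (n+3) = perrin (n+1) + perrin n from rfl, trace_pow_add3,
        perrin_trace (n+1), perrin_trace n]

def CY (n : ℕ) [NeZero n] : Finset (ZMod n → Fin 3) :=
  Finset.univ.filter (fun g => ∀ i, stepB (g i) (g (i+1)))

lemma zmod_cast_val (n : ℕ) [NeZero n] (x : ZMod n) : ((x.val : ℕ) : ZMod n) = x :=
  ZMod.natCast_rightInverse x

lemma CY_card (n : ℕ) [NeZero n] : (CY n).card = (Mtr ^ n).trace := by
  classical
  rw [Matrix.trace]
  rw [Finset.card_eq_sum_card_fiberwise (f := fun g => g 0) (t := Finset.univ)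
    (fun _ _ => Finset.mem_univ _)]
  refine Finset.sum_congr rfl (fun a _ => ?_)
  rw [show (Mtr ^ n).diag a = (W n a a).card from (W_card n a a).symm]
  have hlt : ∀ x : ZMod n, x.val < n + 1 := fun x => lt_of_lt_of_le x.val_lt (Nat.le_succ n)
  apply Finset.card_bij' (fun g _ => fun t : Fin (n+1) => g ((t.val : ℕ) : ZMod n))
    (fun w _ => fun x : ZMod n => w ⟨x.val, hlt x⟩)
  · -- maps to walks
    intro g hg
    simp only [Finset.mem_filter, CY, Finset.mem_univ, true_and] at hg
    obtain ⟨hsteps, h0⟩ := hg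
    simp only [W, Finset.mem_filter, Finset.mem_univ, true_and]
    refine ⟨by simpa using h0, ?_, ?_⟩
    · show g ((Fin.last n).val : ZMod n) = a
      rw [Fin.val_last, ZMod.natCast_self]
      simpa using h0
    · intro i
      have : ((i.succ.val : ℕ) : ZMod n) = ((i.castSucc.val : ℕ) : ZMod n) + 1 := by
        rw [Fin.val_succ, Fin.coe_castSucc]
        push_cast
        ring
      rw [this]
      exact hsteps _
  · -- maps back to fibers
    intro w hw
    simp only [W, Finset.mem_filter, Finset.mem_univ, true_and] at hw
    obtain ⟨h0, hl, hs⟩ := hw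
    simp only [Finset.mem_filter, CY, Finset.mem_univ, true_and]
    constructor
    · intro x
      have hx : x.val < n := x.val_lt
      have hstep := hs ⟨x.val, hx⟩
      have hc : (w ⟨x.val, hlt x⟩ : Fin 3) = w (Fin.castSucc ⟨x.val, hx⟩) := by
        congr 1
      by_cases hsucc : x.val + 1 < n
      · have hval : (x + 1).val = x.val + 1 := by
          rw [show x + 1 = ((x.val + 1 : ℕ) : ZMod n) by rw [Nat.cast_add, Nat.cast_one, zmod_cast_val],
            ZMod.val_cast_of_lt hsucc]
        have : (⟨(x+1).val, hlt (x+1)⟩ : Fin (n+1)) = Fin.succ ⟨x.val, hx⟩ := by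
          ext; simp [hval]
        rw [hc, this]
        exact hstep
      · have hn : x.val + 1 = n := by omega
        have hx1 : x + 1 = 0 := by
          rw [show x + 1 = ((x.val + 1 : ℕ) : ZMod n) by rw [Nat.cast_add, Nat.cast_one, zmod_cast_val],
            hn, ZMod.natCast_self]
        have hv0 : (x + 1).val = 0 := by rw [hx1, ZMod.val_zero]
        have h1 : (⟨(x+1).val, hlt (x+1)⟩ : Fin (n+1)) = 0 := by ext; simp [hv0]
        have h2 : (Fin.succ ⟨x.val, hx⟩ : Fin (n+1)) = Fin.last n := by ext; simp [hn]
        rw [hc, h1, h0, ← hl, ← h2]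
        exact hstep
    · show w ⟨(0 : ZMod n).val, _⟩ = a
      have : (⟨(0 : ZMod n).val, hlt 0⟩ : Fin (n+1)) = 0 := by ext; simp [ZMod.val_zero]
      rw [this, h0]
  · -- left inverse
    intro g _
    funext x
    simp only []
    rw [zmod_cast_val]
  · -- right inverse
    intro w hw
    simp only [W, Finset.mem_filter, Finset.mem_univ, true_and] at hw
    obtain ⟨h0, hl, -⟩ := hw
    funext t
    show w ⟨(((t.val : ℕ) : ZMod n)).val, hlt _⟩ = w t
    by_cases ht : t.val < n
    · have : (⟨(((t.val : ℕ) : ZMod n)).val, hlt _⟩ : Fin (n+1)) = t := by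
        ext; simp [ZMod.val_cast_of_lt ht]
      rw [this]
    · have htn : t.val = n := by omega
      have : (⟨(((t.val : ℕ) : ZMod n)).val, hlt _⟩ : Fin (n+1)) = 0 := by
        ext; simp [htn, ZMod.natCast_self, ZMod.val_zero]
      rw [this, h0, ← hl]
      congr 1
      ext; simp [htn, Fin.val_last]


open scoped Classical in
noncomputable def stf (n : ℕ) (X : Set (ZMod n)) : ZMod n → Fin 3 :=
  fun i => if i ∈ X then 2 else if i + 1 ∈ X then 1 else 0

lemma step_table : ∀ a b : Fin 3, stepB a b = true → (a = 1 ↔ b = 2) := by decide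

lemma step_table2 : ∀ a b c : Fin 3, stepB a b = true → stepB b c = true →
    a = 2 ∨ b = 2 ∨ c = 2 := by decide

lemma fin3_cases : ∀ a : Fin 3, a ≠ 2 → a ≠ 1 → a = 0 := by decide

lemma mis_card_eq (n : ℕ) (hn : 3 ≤ n) :
    {X : Set (ZMod n) | IsMIS n X}.ncard = perrin n := by
  classical
  haveI : NeZero n := ⟨by omega⟩
  rw [perrin_trace n, ← CY_card n, Set.ncard_eq_toFinset_card']
  apply Finset.card_bij' (fun X _ => stf n X) (fun g _ => {i | g i = 2})
  · -- MIS maps to CY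
    intro X hX
    simp only [Set.mem_toFinset, Set.mem_setOf_eq] at hX
    rw [mis_iff n hn] at hX
    obtain ⟨hA, hB⟩ := hX
    simp only [CY, Finset.mem_filter, Finset.mem_univ, true_and]
    intro i
    have e12 : i + 1 + 1 = i + 2 := by ring
    by_cases hi : i ∈ X
    · have h1 : i + 1 ∉ X := hA i hi
      by_cases h2 : i + 2 ∈ X
      · rw [show stf n X i = 2 from if_pos hi,
          show stf n X (i+1) = 1 by rw [stf, if_neg h1, e12, if_pos h2]]
        decide
      · rw [show stf n X i = 2 from if_pos hi,
          show stf n X (i+1) = 0 by rw [stf, if_neg h1, e12, if_neg h2]]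
        decide
    · by_cases h1 : i + 1 ∈ X
      · rw [show stf n X i = 1 by rw [stf, if_neg hi, if_pos h1],
          show stf n X (i+1) = 2 from if_pos h1]
        decide
      · have h2 : i + 2 ∈ X := by
          rcases hB (i+1) h1 with h | h
          · exact absurd (by rwa [show i + 1 - 1 = i by ring] at h) hi
          · rwa [e12] at h
        rw [show stf n X i = 0 by rw [stf, if_neg hi, if_neg h1],
          show stf n X (i+1) = 1 by rw [stf, if_neg h1, e12, if_pos h2]]
        decide
  · -- CY maps to MIS
    intro g hg
    simp only [CY, Finset.mem_filter, Finset.mem_univ, true_and] at hg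
    simp only [Set.mem_toFinset, Set.mem_setOf_eq]
    rw [mis_iff n hn]
    constructor
    · intro x hx hx1
      simp only [Set.mem_setOf_eq] at hx hx1
      have := (step_table _ _ (hg x)).2 hx1
      rw [hx] at this
      exact absurd this (by decide)
    · intro x hx
      simp only [Set.mem_setOf_eq] at hx
      by_contra hcon
      push_neg at hcon
      obtain ⟨hm, hp⟩ := hcon
      simp only [Set.mem_setOf_eq] at hm hp
      have s1 := hg (x - 1)
      rw [show x - 1 + 1 = x by ring] at s1
      rcases step_table2 _ _ _ s1 (hg x) with h | h | h
      · exact hm h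
      · exact hx h
      · exact hp h
  · -- left inverse
    intro X hX
    ext i
    simp only [Set.mem_setOf_eq, stf]
    by_cases hi : i ∈ X
    · simp [hi]
    · simp only [if_neg hi]
      by_cases h1 : i + 1 ∈ X <;> simp [h1, hi] <;> decide
  · -- right inverse
    intro g hg
    simp only [CY, Finset.mem_filter, Finset.mem_univ, true_and] at hg
    funext x
    simp only [stf, Set.mem_setOf_eq]
    by_cases hx : g x = 2
    · rw [if_pos hx, hx]
    · rw [if_neg hx]
      by_cases h1 : g (x + 1) = 2
      · rw [if_pos h1, (step_table _ _ (hg x)).2 h1]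
      · rw [if_neg h1, fin3_cases _ hx (fun hc => h1 ((step_table _ _ (hg x)).1 hc))]

/-- p(n) = Σ_{d | 2n} (2n/d) · orb_d(n). -/
theorem perrin_orbit_decomposition (n : ℕ) (hn : 3 ≤ n) :
    perrin n = ∑ d ∈ (2 * n).divisors, (2 * n / d) * orbd d n := by
  rw [sum_orbd n hn, mis_card_eq n hn]
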